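/- Fix weights v and let τ = Σ v_i² k_i. For every pair (V, W) with V a projective RS with weights v and W a dual system of V, the joint potential satisfies FP(V,W) := tr(S_V²) + tr(S_W²) ≥ (τ⁴ + d⁴)/(d τ²), and equality holds if and only if S_V = (τ/d) I_d and W = (d/τ)·V = V^#. -/

import Mathlib

open Matrix
open scoped ComplexOrder

/-!
Write `S = S_V` and `t = τ / d`, so that `tr S = d t`. For a dual system `W`,
`S_W = S⁻¹ + S_{W - V^#}`, and the cross term `tr (S⁻¹ S_{W - V^#})` is nonnegative; hence
`tr S_W² ≥ tr S⁻²`, with equality iff `W = V^#`. Next, `tr S² + tr S⁻² ≥ d (t² + t⁻²)` follows from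
the nonnegativity of `tr (S - t)²`, `tr (S⁻¹ - t⁻¹)²` and `tr ((S - t) S⁻¹ (S - t))`, the first of
which vanishes only at `S = t I`. Finally `d (t² + t⁻²) = (τ⁴ + d⁴) / (d τ²)`.
-/

namespace Matrix

variable {𝕜 n : Type*} [RCLike 𝕜] [Fintype n]

lemma re_trace_conjTranspose_mul_self_nonneg {m : Type*} [Fintype m] (A : Matrix m n 𝕜) :
    0 ≤ RCLike.re (Aᴴ * A).trace :=
  (RCLike.nonneg_iff.mp (posSemidef_conjTranspose_mul_self A).trace_nonneg).1

lemma re_trace_conjTranspose_mul_self_eq_zero_iff {m : Type*} [Fintype m] (A : Matrix m n 𝕜) :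
    RCLike.re (Aᴴ * A).trace = 0 ↔ A = 0 := by
  have him := (RCLike.nonneg_iff.mp (posSemidef_conjTranspose_mul_self A).trace_nonneg).2
  rw [← trace_conjTranspose_mul_self_eq_zero_iff, RCLike.ext_iff (K := 𝕜)]
  simp [him]

variable [DecidableEq n]

lemma IsHermitian.re_trace_mul_self_eq {A : Matrix n n 𝕜} (hA : A.IsHermitian) (c : ℝ) :
    RCLike.re (A * A).trace = 2 * c * RCLike.re A.trace - c ^ 2 * Fintype.card n
      + RCLike.re ((A - c • 1)ᴴ * (A - c • 1)).trace := by
  have hsq : (A - c • 1)ᴴ * (A - c • 1) = A * A - (2 * c) • A + c ^ 2 • 1 := by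
    rw [conjTranspose_sub, hA.eq, conjTranspose_smul, star_trivial, conjTranspose_one]
    simp only [sub_mul, mul_sub, smul_mul_assoc, mul_smul_comm, one_mul, mul_one]
    module
  rw [hsq]
  simp [RCLike.smul_re]

lemma PosDef.two_mul_card_sub_re_trace_le_re_trace_inv {S : Matrix n n 𝕜} (hS : S.PosDef) (c : ℝ) :
    2 * c * Fintype.card n - RCLike.re S.trace ≤ c ^ 2 * RCLike.re S⁻¹.trace := by
  have hdet : IsUnit S.det := (isUnit_iff_isUnit_det S).mp hS.isUnit
  have hconj : (S - c • 1)ᴴ * S⁻¹ * (S - c • 1) = S - (2 * c) • 1 + c ^ 2 • S⁻¹ := by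
    rw [conjTranspose_sub, hS.isHermitian.eq, conjTranspose_smul, star_trivial, conjTranspose_one]
    simp only [sub_mul, mul_sub, smul_mul_assoc, mul_smul_comm, one_mul, mul_one,
      mul_nonsing_inv S hdet, nonsing_inv_mul S hdet]
    module
  have hnonneg := (RCLike.nonneg_iff.mp
    (hS.inv.posSemidef.conjTranspose_mul_mul_same (S - c • 1)).trace_nonneg).1
  rw [hconj] at hnonneg
  simp only [trace_add, trace_sub, trace_smul, trace_one, map_add, map_sub, RCLike.smul_re,
    RCLike.natCast_re] at hnonneg
  linarith

lemma inv_smul_one {t : ℝ} (ht : t ≠ 0) : (t • (1 : Matrix n n 𝕜))⁻¹ = t⁻¹ • 1 :=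
  inv_eq_right_inv (by rw [smul_mul_smul_comm, mul_inv_cancel₀ ht, one_smul, one_mul])

theorem PosDef.le_re_trace_sq_add_re_trace_inv_sq {S : Matrix n n 𝕜} (hS : S.PosDef) {t : ℝ}
    (ht : 0 < t) (htr : RCLike.re S.trace = Fintype.card n * t) :
    Fintype.card n * (t ^ 2 + t⁻¹ ^ 2) ≤ RCLike.re (S * S).trace + RCLike.re (S⁻¹ * S⁻¹).trace ∧
      (RCLike.re (S * S).trace + RCLike.re (S⁻¹ * S⁻¹).trace = Fintype.card n * (t ^ 2 + t⁻¹ ^ 2)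
        ↔ S = t • 1) := by
  have hsq := hS.isHermitian.re_trace_mul_self_eq t
  have hinv_sq := hS.inv.isHermitian.re_trace_mul_self_eq t⁻¹
  have hα := re_trace_conjTranspose_mul_self_nonneg (S - t • 1)
  have hβ := re_trace_conjTranspose_mul_self_nonneg (S⁻¹ - t⁻¹ • 1)
  have hinv : Fintype.card n * t⁻¹ ≤ RCLike.re S⁻¹.trace := by
    have := hS.two_mul_card_sub_re_trace_le_re_trace_inv t
    rw [htr] at this
    rw [← div_eq_mul_inv, div_le_iff₀ ht]
    nlinarith
  have hbound : Fintype.card n * (t ^ 2 + t⁻¹ ^ 2) + RCLike.re ((S - t • 1)ᴴ * (S - t • 1)).trace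
      ≤ RCLike.re (S * S).trace + RCLike.re (S⁻¹ * S⁻¹).trace := by
    rw [hsq, hinv_sq, htr]
    have : 0 ≤ t⁻¹ := inv_nonneg.mpr ht.le
    nlinarith
  refine ⟨by linarith, fun heq ↦ ?_, fun hSt ↦ ?_⟩
  · rw [← sub_eq_zero, ← re_trace_conjTranspose_mul_self_eq_zero_iff]
    linarith
  · rw [hSt, inv_smul_one ht.ne']
    simp only [Algebra.mul_smul_comm, mul_one, smul_smul, trace_smul, trace_one, RCLike.smul_re,
      RCLike.natCast_re]
    ring

end Matrix

namespace ReconstructionSystem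

variable {𝕜 n ι : Type*} [RCLike 𝕜] [Fintype ι] {κ : ι → Type*} [∀ i, Fintype (κ i)]

def frameOperator (V : ∀ i, Matrix (κ i) n 𝕜) : Matrix n n 𝕜 := ∑ i, (V i)ᴴ * V i

lemma isHermitian_frameOperator (V : ∀ i, Matrix (κ i) n 𝕜) : (frameOperator V).IsHermitian :=
  isSelfAdjoint_sum _ fun i _ ↦ isHermitian_conjTranspose_mul_self (V i)

variable [Fintype n]

lemma trace_frameOperator (V : ∀ i, Matrix (κ i) n 𝕜) :
    (frameOperator V).trace = ∑ i, (V i * (V i)ᴴ).trace := by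
  simp only [frameOperator, trace_sum, trace_mul_comm (V _)ᴴ]

lemma re_trace_frameOperator_of_mul_conjTranspose_eq [∀ i, DecidableEq (κ i)]
    {V : ∀ i, Matrix (κ i) n 𝕜} {c : ι → ℝ}
    (hV : ∀ i, V i * (V i)ᴴ = c i • 1) :
    RCLike.re (frameOperator V).trace = ∑ i, c i * Fintype.card (κ i) := by
  simp [trace_frameOperator, hV, RCLike.smul_re]

lemma frameOperator_eq_zero_iff (V : ∀ i, Matrix (κ i) n 𝕜) : frameOperator V = 0 ↔ V = 0 := by
  refine ⟨fun h ↦ ?_, fun h ↦ by simp [frameOperator, h]⟩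
  have hsum : ∑ i, RCLike.re ((V i)ᴴ * V i).trace = 0 := by
    rw [← map_sum, ← trace_sum]
    exact congrArg (RCLike.re ∘ trace) h |>.trans (by simp)
  funext i
  exact (re_trace_conjTranspose_mul_self_eq_zero_iff _).mp <|
    (Finset.sum_eq_zero_iff_of_nonneg fun j _ ↦ re_trace_conjTranspose_mul_self_nonneg (V j)).mp
      hsum i (Finset.mem_univ i)

lemma re_trace_mul_frameOperator_nonneg {T : Matrix n n 𝕜} (hT : T.PosSemidef)
    (D : ∀ i, Matrix (κ i) n 𝕜) : 0 ≤ RCLike.re (T * frameOperator D).trace := by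
  rw [frameOperator, Finset.mul_sum, trace_sum, map_sum]
  refine Finset.sum_nonneg fun i _ ↦ ?_
  rw [← Matrix.mul_assoc, trace_mul_comm, ← Matrix.mul_assoc]
  exact (RCLike.nonneg_iff.mp (hT.mul_mul_conjTranspose_same (D i)).trace_nonneg).1

variable [DecidableEq n]

noncomputable def canonicalDual (V : ∀ i, Matrix (κ i) n 𝕜) (i : ι) : Matrix (κ i) n 𝕜 :=
  V i * (frameOperator V)⁻¹

lemma frameOperator_eq_inv_add {V W : ∀ i, Matrix (κ i) n 𝕜}
    (hdual : ∑ i, (W i)ᴴ * V i = 1) (hV : IsUnit (frameOperator V)) :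
    frameOperator W = (frameOperator V)⁻¹ + frameOperator (W - canonicalDual V) := by
  set T := (frameOperator V)⁻¹
  have hTH : Tᴴ = T := (isHermitian_frameOperator V).inv
  have hdual' : ∑ i, (V i)ᴴ * W i = 1 := by
    simpa [conjTranspose_sum] using congrArg conjTranspose hdual
  have hST : frameOperator V * T = 1 :=
    mul_nonsing_inv _ ((isUnit_iff_isUnit_det _).mp hV)
  have hterm (i : ι) : (W i - V i * T)ᴴ * (W i - V i * T)
      = (W i)ᴴ * W i - (W i)ᴴ * V i * T - T * ((V i)ᴴ * W i) + T * ((V i)ᴴ * V i) * T := by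
    simp only [conjTranspose_sub, conjTranspose_mul, hTH, Matrix.sub_mul, Matrix.mul_sub,
      Matrix.mul_assoc]
    abel
  have hdefect : frameOperator (W - canonicalDual V) = frameOperator W - T := calc
    frameOperator (W - canonicalDual V)
      = frameOperator W - (∑ i, (W i)ᴴ * V i) * T - T * ∑ i, (V i)ᴴ * W i
          + T * frameOperator V * T := by
      change ∑ i, (W i - V i * T)ᴴ * (W i - V i * T) = _
      simp only [hterm, Finset.sum_add_distrib, Finset.sum_sub_distrib, ← Finset.sum_mul,
        ← Finset.mul_sum]
      rfl
    _ = frameOperator W - T := by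
      rw [hdual, hdual', Matrix.mul_assoc, hST]
      noncomm_ring
  rw [hdefect]
  abel

theorem re_trace_inv_sq_le_re_trace_frameOperator_sq {V W : ∀ i, Matrix (κ i) n 𝕜}
    (hdual : ∑ i, (W i)ᴴ * V i = 1) (hV : (frameOperator V).PosDef) :
    RCLike.re ((frameOperator V)⁻¹ * (frameOperator V)⁻¹).trace
        ≤ RCLike.re (frameOperator W * frameOperator W).trace ∧
      (RCLike.re (frameOperator W * frameOperator W).trace
          = RCLike.re ((frameOperator V)⁻¹ * (frameOperator V)⁻¹).trace
        ↔ W = canonicalDual V) := by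
  set T := (frameOperator V)⁻¹
  set P := frameOperator (W - canonicalDual V)
  have hPH : Pᴴ = P := (isHermitian_frameOperator _).eq
  have hexpand : RCLike.re (frameOperator W * frameOperator W).trace
      = RCLike.re (T * T).trace + 2 * RCLike.re (T * P).trace + RCLike.re (Pᴴ * P).trace := by
    have hsplit : frameOperator W = T + P := frameOperator_eq_inv_add hdual hV.isUnit
    rw [hsplit, hPH]
    simp only [add_mul, mul_add, trace_add, map_add, trace_mul_comm P T]
    ring
  have hTP : 0 ≤ RCLike.re (T * P).trace :=
    re_trace_mul_frameOperator_nonneg hV.inv.posSemidef _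
  have hPP := re_trace_conjTranspose_mul_self_nonneg P
  refine ⟨by linarith, fun heq ↦ ?_, fun hW ↦ ?_⟩
  · rw [← sub_eq_zero, ← frameOperator_eq_zero_iff, ← re_trace_conjTranspose_mul_self_eq_zero_iff]
    linarith
  · have hP : P = 0 := (frameOperator_eq_zero_iff _).mpr (sub_eq_zero.mpr hW)
    simp [hexpand, hP]

lemma canonicalDual_of_frameOperator_eq_smul_one {V : ∀ i, Matrix (κ i) n 𝕜} {t : ℝ} (ht : t ≠ 0)
    (hV : frameOperator V = t • 1) : canonicalDual V = fun i ↦ t⁻¹ • V i := by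
  funext i
  rw [canonicalDual, hV, inv_smul_one ht, Matrix.mul_smul, Matrix.mul_one]

end ReconstructionSystem

open ReconstructionSystem

theorem joint_potential_lower_bound_general
    (d m : ℕ) (hd : 0 < d) (k : Fin m → ℕ)
    (v : Fin m → ℝ)
    (τ : ℝ) (hτ : τ = ∑ i, v i ^ 2 * k i)
    (V W : ∀ i : Fin m, Matrix (Fin (k i)) (Fin d) ℂ)
    (hproj : ∀ i, V i * (V i)ᴴ = ((v i ^ 2 : ℝ) : ℂ) • 1)
    (S : Matrix (Fin d) (Fin d) ℂ) (hS : S = ∑ i, (V i)ᴴ * V i)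
    (hSpd : S.PosDef)
    (hdual : ∑ i, (W i)ᴴ * V i = 1)
    (SW : Matrix (Fin d) (Fin d) ℂ) (hSW : SW = ∑ i, (W i)ᴴ * W i) :
    (τ ^ 4 + (d : ℝ) ^ 4) / (d * τ ^ 2)
      ≤ (Matrix.trace (S * S)).re + (Matrix.trace (SW * SW)).re
    ∧ ((Matrix.trace (S * S)).re + (Matrix.trace (SW * SW)).re
          = (τ ^ 4 + (d : ℝ) ^ 4) / (d * τ ^ 2)
        ↔ S = ((τ / d : ℝ) : ℂ) • 1 ∧ ∀ i, W i = ((d / τ : ℝ) : ℂ) • V i) := by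
  obtain rfl : S = frameOperator V := hS
  obtain rfl : SW = frameOperator W := hSW
  have htrace : (frameOperator V).trace.re = τ := by
    have := re_trace_frameOperator_of_mul_conjTranspose_eq (c := fun i ↦ v i ^ 2)
      fun i ↦ by rw [hproj i, Complex.coe_smul]
    simpa only [RCLike.re_to_complex, Fintype.card_fin, ← hτ] using this
  have : Nonempty (Fin d) := Fin.pos_iff_nonempty.mp hd
  have hτ_pos : 0 < τ := htrace ▸ (Complex.pos_iff.mp hSpd.trace_pos).1
  set t := τ / d with ht_def
  have ht : 0 < t := by positivity
  have htr : RCLike.re (frameOperator V).trace = Fintype.card (Fin d) * t := by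
    simp only [RCLike.re_to_complex, htrace, Fintype.card_fin, t]
    field_simp
  obtain ⟨hbound, hbound_eq⟩ := hSpd.le_re_trace_sq_add_re_trace_inv_sq ht htr
  obtain ⟨hdual_le, hdual_eq⟩ := re_trace_inv_sq_le_re_trace_frameOperator_sq hdual hSpd
  simp only [RCLike.re_to_complex, Fintype.card_fin] at hbound hbound_eq hdual_le hdual_eq
  have hlower : (τ ^ 4 + (d : ℝ) ^ 4) / (d * τ ^ 2) = d * (t ^ 2 + t⁻¹ ^ 2) := by
    rw [ht_def]; field_simp
  have hcanon := canonicalDual_of_frameOperator_eq_smul_one (V := V) ht.ne'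
  simp only [Complex.coe_smul, ← inv_div (τ : ℝ), ← ht_def, hlower]
  refine ⟨by linarith, fun heq ↦ ?_, fun ⟨hSt, hW⟩ ↦ ?_⟩
  · have hSt := hbound_eq.mp (by linarith [hdual_le])
    refine ⟨hSt, fun i ↦ ?_⟩
    rw [hdual_eq.mp (by linarith), hcanon hSt]
  · have hWc : W = canonicalDual V := by rw [hcanon hSt]; exact funext hW
    linarith [hbound_eq.mpr hSt, hdual_eq.mpr hWc]

/-- For every pair `(V, W)` with `V` a projective reconstruction
system with weights `v` (so `tr S_V = τ = ∑ vᵢ² kᵢ`) and `W` a dual system of `V`, the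
joint potential `FP(V,W) = tr(S_V²) + tr(S_W²)` is at least `(τ⁴ + d⁴)/(d τ²)`, with
equality iff `V` is tight (`S_V = (τ/d) I`) and `W = (d/τ)·V = V^#`. -/
theorem joint_potential_lower_bound
    (d m : ℕ) (hd : 0 < d) (k : Fin m → ℕ)
    (v : Fin m → ℝ) (hv : ∀ i, 0 < v i)
    (τ : ℝ) (hτ : τ = ∑ i, v i ^ 2 * k i)
    (V W : ∀ i : Fin m, Matrix (Fin (k i)) (Fin d) ℂ)
    (hproj : ∀ i, V i * (V i)ᴴ = ((v i ^ 2 : ℝ) : ℂ) • 1)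
    (S : Matrix (Fin d) (Fin d) ℂ) (hS : S = ∑ i, (V i)ᴴ * V i)
    (hSpd : S.PosDef)
    (hdual : ∑ i, (W i)ᴴ * V i = 1)
    (SW : Matrix (Fin d) (Fin d) ℂ) (hSW : SW = ∑ i, (W i)ᴴ * W i) :
    (τ ^ 4 + (d : ℝ) ^ 4) / (d * τ ^ 2)
      ≤ (Matrix.trace (S * S)).re + (Matrix.trace (SW * SW)).re
    ∧ ((Matrix.trace (S * S)).re + (Matrix.trace (SW * SW)).re
          = (τ ^ 4 + (d : ℝ) ^ 4) / (d * τ ^ 2)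
        ↔ S = ((τ / d : ℝ) : ℂ) • 1 ∧ ∀ i, W i = ((d / τ : ℝ) : ℂ) • V i) :=
  joint_potential_lower_bound_general d m hd k v τ hτ V W hproj S hS hSpd hdual SW hSW
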